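/- Let Z ⊂ ℝ^d be nonempty convex, ‖·‖ a norm on ℝ^d with dual norm ‖v‖_* := sup{⟨v, z⟩ : ‖z‖ ≤ 1}, and r : Z → ℝ a differentiable function whose Bregman divergence V_z(z') := r(z') − r(z) − ⟨∇r(z), z' − z⟩ satisfies V_z(z') ≥ ½‖z − z'‖² for all z, z' ∈ Z. Suppose moreover that ‖∇r(z) − ∇r(z')‖_* ≤ L_r‖z − z'‖ for all z, z' ∈ Z and that ‖z − z'‖ ≤ R for all z, z' ∈ Z, for some L_r, R > 0. Let g : Z → ℝ^d be monotone, α, β > 0, q ∈ Z, and suppose w_α, w_β ∈ Z satisfy, for all u ∈ Z: ⟨g(w_α), w_α − u⟩ ≤ α·[V_q(u) − V_{w_α}(u) − V_q(w_α)] and ⟨g(w_β), w_β − u⟩ ≤ β·[V_q(u) − V_{w_β}(u) − V_q(w_β)]. Then ‖w_α − w_β‖ ≤ (2 L_r R / max{α, β}) · |α − β|. -/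

import Mathlib

/-!
Testing each variational inequality at the other point and adding them, monotonicity of `g`
leaves `α V_{wα}(wβ) + β V_{wβ}(wα) ≤ (α - β) (V_q(wβ) - V_q(wα))`. By the three-point identity
the right side is `(α - β) (⟪∇r(wβ) - ∇r(q), wβ - wα⟫ - V_{wβ}(wα))`, so for `β ≤ α`,
`α (V_{wα}(wβ) + V_{wβ}(wα)) ≤ (α - β) L_r R ‖wα - wβ‖`, while strong convexity bounds the left
side below by `α ‖wα - wβ‖²`.
-/

open RealInnerProductSpace

/-- Bregman divergence `V_z(z') = r(z') − r(z) − ⟨∇r(z), z' − z⟩` of a differentiable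
function `r` with gradient map `gr`. -/
noncomputable def breg {d : ℕ} (r : EuclideanSpace ℝ (Fin d) → ℝ)
    (gr : EuclideanSpace ℝ (Fin d) → EuclideanSpace ℝ (Fin d))
    (z z' : EuclideanSpace ℝ (Fin d)) : ℝ :=
  r z' - r z - ⟪gr z, z' - z⟫

/-- The dual norm `‖v‖_* := sup{⟨v, z⟩ : N(z) ≤ 1}` of a norm `N` on `ℝ^d`. -/
noncomputable def dualNorm {d : ℕ} (N : EuclideanSpace ℝ (Fin d) → ℝ)
    (v : EuclideanSpace ℝ (Fin d)) : ℝ :=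
  sSup ((fun z => ⟪v, z⟫) '' {z | N z ≤ 1})

section NormAxioms

variable {E : Type*} [AddCommGroup E] [Module ℝ E] {N : E → ℝ}

theorem map_neg_of_abs_smul (hNsmul : ∀ (a : ℝ) (x : E), N (a • x) = |a| * N x) (x : E) :
    N (-x) = N x := by
  simpa using hNsmul (-1) x

theorem nonneg_of_abs_smul_of_add_le (hNsmul : ∀ (a : ℝ) (x : E), N (a • x) = |a| * N x)
    (hNadd : ∀ x y, N (x + y) ≤ N x + N y) (x : E) : 0 ≤ N x := by
  have h := hNadd x (-x)
  rw [add_neg_cancel, map_neg_of_abs_smul hNsmul, ← zero_smul ℝ x, hNsmul, abs_zero,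
    zero_mul] at h
  linarith

end NormAxioms

def NormedBy (E : Type*) (_N : E → ℝ) : Type _ := E

namespace NormedBy

variable {E : Type*} [AddCommGroup E] [Module ℝ E] (N : E → ℝ)

instance : AddCommGroup (NormedBy E N) := inferInstanceAs (AddCommGroup E)

instance : Module ℝ (NormedBy E N) := inferInstanceAs (Module ℝ E)

instance : Norm (NormedBy E N) := ⟨N⟩

variable {N}

theorem normedSpaceCore (hNzero : ∀ x, N x = 0 ↔ x = 0)
    (hNsmul : ∀ (a : ℝ) (x : E), N (a • x) = |a| * N x)
    (hNadd : ∀ x y, N (x + y) ≤ N x + N y) : NormedSpace.Core ℝ (NormedBy E N) :=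
  ⟨⟨nonneg_of_abs_smul_of_add_le hNsmul hNadd, hNsmul, hNadd⟩, hNzero⟩

end NormedBy

theorem isBounded_setOf_le_one_of_norm_axioms {E : Type*} [NormedAddCommGroup E]
    [NormedSpace ℝ E] [FiniteDimensional ℝ E] {N : E → ℝ} (hNzero : ∀ x, N x = 0 ↔ x = 0)
    (hNsmul : ∀ (a : ℝ) (x : E), N (a • x) = |a| * N x)
    (hNadd : ∀ x y, N (x + y) ≤ N x + N y) :
    Bornology.IsBounded {x | N x ≤ 1} := by
  let core := NormedBy.normedSpaceCore hNzero hNsmul hNadd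
  let := NormedAddCommGroup.ofCore core
  let := NormedSpace.ofCore core
  have : FiniteDimensional ℝ (NormedBy E N) := inferInstanceAs (FiniteDimensional ℝ E)
  -- all norms on a finite-dimensional space are equivalent
  let e : NormedBy E N →L[ℝ] E :=
    (show NormedBy E N ≃ₗ[ℝ] E from LinearEquiv.refl ℝ E).toContinuousLinearEquiv
  refine isBounded_iff_forall_norm_le.2 ⟨‖e‖, fun x (hx : N x ≤ 1) => ?_⟩
  calc ‖x‖ = ‖e x‖ := rfl
    _ ≤ ‖e‖ * N x := e.le_opNorm (show NormedBy E N from x)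
    _ ≤ ‖e‖ := mul_le_of_le_one_right (norm_nonneg e) hx

theorem inner_le_dualNorm_mul {d : ℕ} {N : EuclideanSpace ℝ (Fin d) → ℝ}
    (hNzero : ∀ x, N x = 0 ↔ x = 0)
    (hNsmul : ∀ (a : ℝ) (x : EuclideanSpace ℝ (Fin d)), N (a • x) = |a| * N x)
    (hNadd : ∀ x y, N (x + y) ≤ N x + N y) (v w : EuclideanSpace ℝ (Fin d)) :
    ⟪v, w⟫ ≤ dualNorm N v * N w := by
  obtain hw | hw := (nonneg_of_abs_smul_of_add_le hNsmul hNadd w).eq_or_lt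
  · simp [(hNzero w).1 hw.symm, (hNzero 0).2 rfl]
  have hbdd : BddAbove ((fun z => ⟪v, z⟫) '' {z | N z ≤ 1}) :=
    ((innerSL ℝ v).lipschitz.isBounded_image
      (isBounded_setOf_le_one_of_norm_axioms hNzero hNsmul hNadd)).bddAbove
  have hmem : (N w)⁻¹ • w ∈ {z | N z ≤ 1} := by
    show N _ ≤ 1
    rw [hNsmul, abs_of_pos (inv_pos.2 hw), inv_mul_cancel₀ hw.ne']
  have hle : ⟪v, (N w)⁻¹ • w⟫ ≤ dualNorm N v := le_csSup hbdd ⟨_, hmem, rfl⟩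
  rwa [real_inner_smul_right, inv_mul_le_iff₀ hw, mul_comm] at hle

theorem breg_sub_breg {d : ℕ} (r : EuclideanSpace ℝ (Fin d) → ℝ)
    (gr : EuclideanSpace ℝ (Fin d) → EuclideanSpace ℝ (Fin d)) (q z z' : EuclideanSpace ℝ (Fin d)) :
    breg r gr q z' - breg r gr q z = breg r gr z z' + ⟪gr z - gr q, z' - z⟫ := by
  simp only [breg, inner_sub_left, inner_sub_right]
  ring

theorem mul_breg_add_breg_le {d : ℕ} {r : EuclideanSpace ℝ (Fin d) → ℝ}
    {gr g : EuclideanSpace ℝ (Fin d) → EuclideanSpace ℝ (Fin d)} {a b : ℝ}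
    {q w w' : EuclideanSpace ℝ (Fin d)}
    (hw : ⟪g w, w - w'⟫ ≤ a * (breg r gr q w' - breg r gr w w' - breg r gr q w))
    (hw' : ⟪g w', w' - w⟫ ≤ b * (breg r gr q w - breg r gr w' w - breg r gr q w'))
    (hmono : 0 ≤ ⟪g w - g w', w - w'⟫) :
    a * (breg r gr w w' + breg r gr w' w) ≤ (a - b) * ⟪gr w' - gr q, w' - w⟫ := by
  have hthree := breg_sub_breg r gr q w' w
  have hsplit : ⟪g w - g w', w - w'⟫ = ⟪g w, w - w'⟫ + ⟪g w', w' - w⟫ := by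
    rw [inner_sub_left, ← neg_sub w, inner_neg_right]; ring
  have hswap : ⟪gr w' - gr q, w - w'⟫ = -⟪gr w' - gr q, w' - w⟫ := by
    rw [← inner_neg_right, neg_sub]
  rw [hswap] at hthree
  linear_combination hw + hw' + hmono + hsplit + (b - a) * hthree

def IsProxPoint {d : ℕ} (Z : Set (EuclideanSpace ℝ (Fin d))) (r : EuclideanSpace ℝ (Fin d) → ℝ)
    (gr g : EuclideanSpace ℝ (Fin d) → EuclideanSpace ℝ (Fin d)) (a : ℝ)
    (q w : EuclideanSpace ℝ (Fin d)) : Prop :=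
  ∀ u ∈ Z, ⟪g w, w - u⟫ ≤ a * (breg r gr q u - breg r gr w u - breg r gr q w)

theorem mul_norm_sub_le_of_isProxPoint {d : ℕ} {Z : Set (EuclideanSpace ℝ (Fin d))}
    {N : EuclideanSpace ℝ (Fin d) → ℝ} (hNzero : ∀ x, N x = 0 ↔ x = 0)
    (hNsmul : ∀ (a : ℝ) (x : EuclideanSpace ℝ (Fin d)), N (a • x) = |a| * N x)
    (hNadd : ∀ x y, N (x + y) ≤ N x + N y) {r : EuclideanSpace ℝ (Fin d) → ℝ}
    {gr g : EuclideanSpace ℝ (Fin d) → EuclideanSpace ℝ (Fin d)}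
    (hstrong : ∀ z ∈ Z, ∀ z' ∈ Z, 1 / 2 * N (z - z') ^ 2 ≤ breg r gr z z') {Lr R : ℝ}
    (hLr : 0 ≤ Lr) (hLip : ∀ z ∈ Z, ∀ z' ∈ Z, dualNorm N (gr z - gr z') ≤ Lr * N (z - z'))
    (hdiam : ∀ z ∈ Z, ∀ z' ∈ Z, N (z - z') ≤ R)
    (hmono : ∀ z ∈ Z, ∀ z' ∈ Z, 0 ≤ ⟪g z' - g z, z' - z⟫) {a b : ℝ} (ha : 0 ≤ a) (hba : b ≤ a)
    {q w w' : EuclideanSpace ℝ (Fin d)} (hq : q ∈ Z) (hw : w ∈ Z) (hw' : w' ∈ Z)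
    (hprox : IsProxPoint Z r gr g a q w) (hprox' : IsProxPoint Z r gr g b q w') :
    a * N (w - w') ≤ (a - b) * (Lr * R) := by
  have hN := nonneg_of_abs_smul_of_add_le hNsmul hNadd
  set n := N (w - w')
  have hsym : N (w' - w) = n := by rw [← neg_sub, map_neg_of_abs_smul hNsmul]
  have hstr : n ^ 2 ≤ breg r gr w w' + breg r gr w' w := by
    linarith [hstrong w hw w' hw', hsym ▸ hstrong w' hw' w hw]
  have hpair : ⟪gr w' - gr q, w' - w⟫ ≤ Lr * R * n := calc
    _ ≤ dualNorm N (gr w' - gr q) * n := hsym ▸ inner_le_dualNorm_mul hNzero hNsmul hNadd _ _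
    _ ≤ Lr * R * n := mul_le_mul_of_nonneg_right
      ((hLip w' hw' q hq).trans (mul_le_mul_of_nonneg_left (hdiam w' hw' q hq) hLr)) (hN _)
  have hsq : a * n * n ≤ (a - b) * (Lr * R) * n := calc
    a * n * n = a * n ^ 2 := by ring
    _ ≤ a * (breg r gr w w' + breg r gr w' w) := by gcongr
    _ ≤ (a - b) * ⟪gr w' - gr q, w' - w⟫ :=
      mul_breg_add_breg_le (hprox w' hw') (hprox' w hw) (hmono w' hw' w hw)
    _ ≤ (a - b) * (Lr * R * n) := by gcongr
    _ = (a - b) * (Lr * R) * n := by ring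
  obtain hn | hn := (hN (w - w') : 0 ≤ n).eq_or_lt
  · rw [show n = 0 from hn.symm, mul_zero]
    exact mul_nonneg (sub_nonneg.2 hba) (mul_nonneg hLr ((hN _).trans (hdiam w hw w' hw')))
  · exact le_of_mul_le_mul_right hsq hn

theorem stmt13_general {d : ℕ} (Z : Set (EuclideanSpace ℝ (Fin d)))
    (N : EuclideanSpace ℝ (Fin d) → ℝ)
    (hNzero : ∀ x, N x = 0 ↔ x = 0)
    (hNsmul : ∀ (a : ℝ) (x : EuclideanSpace ℝ (Fin d)), N (a • x) = |a| * N x)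
    (hNadd : ∀ x y, N (x + y) ≤ N x + N y)
    (r : EuclideanSpace ℝ (Fin d) → ℝ)
    (gr : EuclideanSpace ℝ (Fin d) → EuclideanSpace ℝ (Fin d))
    (hstrong : ∀ z ∈ Z, ∀ z' ∈ Z, 1 / 2 * N (z - z') ^ 2 ≤ breg r gr z z')
    (Lr R : ℝ) (hLr : 0 < Lr)
    (hLip : ∀ z ∈ Z, ∀ z' ∈ Z, dualNorm N (gr z - gr z') ≤ Lr * N (z - z'))
    (hdiam : ∀ z ∈ Z, ∀ z' ∈ Z, N (z - z') ≤ R)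
    (g : EuclideanSpace ℝ (Fin d) → EuclideanSpace ℝ (Fin d))
    (hmono : ∀ z ∈ Z, ∀ z' ∈ Z, 0 ≤ ⟪g z' - g z, z' - z⟫)
    (α β : ℝ) (hα : 0 < α)
    (q : EuclideanSpace ℝ (Fin d)) (hq : q ∈ Z)
    (wα wβ : EuclideanSpace ℝ (Fin d)) (hwα : wα ∈ Z) (hwβ : wβ ∈ Z)
    (hvarα : ∀ u ∈ Z, ⟪g wα, wα - u⟫ ≤ α * (breg r gr q u - breg r gr wα u - breg r gr q wα))
    (hvarβ : ∀ u ∈ Z, ⟪g wβ, wβ - u⟫ ≤ β * (breg r gr q u - breg r gr wβ u - breg r gr q wβ)) :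
    N (wα - wβ) ≤ 2 * Lr * R / max α β * |α - β| := by
  have hmax : 0 < max α β := lt_max_of_lt_left hα
  have hR : 0 ≤ R := (nonneg_of_abs_smul_of_add_le hNsmul hNadd _).trans (hdiam q hq q hq)
  suffices h : max α β * N (wα - wβ) ≤ |α - β| * (Lr * R) by
    rw [div_mul_eq_mul_div, le_div_iff₀ hmax]
    linarith [mul_nonneg (abs_nonneg (α - β)) (mul_nonneg hLr.le hR)]
  rcases le_total β α with hβα | hαβ
  · rw [max_eq_left hβα, abs_of_nonneg (sub_nonneg.2 hβα)]
    exact mul_norm_sub_le_of_isProxPoint hNzero hNsmul hNadd hstrong hLr.le hLip hdiam hmono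
      hα.le hβα hq hwα hwβ hvarα hvarβ
  · rw [max_eq_right hαβ, abs_of_nonpos (sub_nonpos.2 hαβ), neg_sub,
      ← map_neg_of_abs_smul hNsmul (wα - wβ), neg_sub]
    exact mul_norm_sub_le_of_isProxPoint hNzero hNsmul hNadd hstrong hLr.le hLip hdiam hmono
      (hα.trans_le hαβ).le hαβ hq hwβ hwα hvarβ hvarα

/-- Lipschitz-type bound on proximal mappings with respect to the
regularization level: if `w_α = prox_q^α(g)` and `w_β = prox_q^β(g)`, `∇r` is
`L_r`-Lipschitz (from `N` to the dual norm) and the `N`-diameter of `Z` is at most `R`,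
then `N(w_α − w_β) ≤ (2 L_r R / max{α,β}) · |α − β|`. -/
theorem stmt13 {d : ℕ} (Z : Set (EuclideanSpace ℝ (Fin d)))
    (hZne : Z.Nonempty) (hZconv : Convex ℝ Z)
    (N : EuclideanSpace ℝ (Fin d) → ℝ)
    (hNzero : ∀ x, N x = 0 ↔ x = 0)
    (hNsmul : ∀ (a : ℝ) (x : EuclideanSpace ℝ (Fin d)), N (a • x) = |a| * N x)
    (hNadd : ∀ x y, N (x + y) ≤ N x + N y)
    (r : EuclideanSpace ℝ (Fin d) → ℝ)
    (gr : EuclideanSpace ℝ (Fin d) → EuclideanSpace ℝ (Fin d))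
    (hgr : ∀ z ∈ Z, HasGradientAt r (gr z) z)
    (hstrong : ∀ z ∈ Z, ∀ z' ∈ Z, 1 / 2 * N (z - z') ^ 2 ≤ breg r gr z z')
    (Lr R : ℝ) (hLr : 0 < Lr) (hR : 0 < R)
    (hLip : ∀ z ∈ Z, ∀ z' ∈ Z, dualNorm N (gr z - gr z') ≤ Lr * N (z - z'))
    (hdiam : ∀ z ∈ Z, ∀ z' ∈ Z, N (z - z') ≤ R)
    (g : EuclideanSpace ℝ (Fin d) → EuclideanSpace ℝ (Fin d))
    (hmono : ∀ z ∈ Z, ∀ z' ∈ Z, 0 ≤ ⟪g z' - g z, z' - z⟫)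
    (α β : ℝ) (hα : 0 < α) (hβ : 0 < β)
    (q : EuclideanSpace ℝ (Fin d)) (hq : q ∈ Z)
    (wα wβ : EuclideanSpace ℝ (Fin d)) (hwα : wα ∈ Z) (hwβ : wβ ∈ Z)
    (hvarα : ∀ u ∈ Z, ⟪g wα, wα - u⟫ ≤ α * (breg r gr q u - breg r gr wα u - breg r gr q wα))
    (hvarβ : ∀ u ∈ Z, ⟪g wβ, wβ - u⟫ ≤ β * (breg r gr q u - breg r gr wβ u - breg r gr q wβ)) :
    N (wα - wβ) ≤ 2 * Lr * R / max α β * |α - β| :=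
  stmt13_general Z N hNzero hNsmul hNadd r gr hstrong Lr R hLr hLip hdiam g hmono α β hα q hq wα wβ
    hwα hwβ hvarα hvarβ
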